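/- arXiv:2502.07199 — 2 statements merged into one kernel-verified Lean document; each statement's English description precedes it below -/
import Mathlib

section
/- Fix integers K ≥ 2, reals σ > 0, c > 0 with Kc ≥ 1, δ ∈ (0,1), and means μ_1 > μ_2 ≥ … ≥ μ_K with gap Δ = μ_1 − μ_2. Let t_W and n be positive integers with t_W ≥ (2σ/Δ)·√(Kc·ln(K/δ)) and n ≥ t_W/(Kc), and let X_{k,t} (k ∈ {1,…,K}, t ∈ {t_W+1,…,t_W+n}) be mutually independent real random variables with X_{k,t} ~ N(μ_k, σ²/t). Define the empirical means μ̂'_k = (1/n)·Σ_{t=t_W+1}^{t_W+n} X_{k,t}. Then with probability at least 1 − δ, μ̂'_1 > μ̂'_j for every j ≠ 1 (i.e., the arm with the highest empirical mean is arm 1). Moreover, the cost of this procedure with t_W = (2σ/Δ)·√(Kc·ln(K/δ)) and n = t_W/(Kc) satisfies (t_W + n) + c·K·n = (2σ/Δ)·(2 + 1/(Kc))·√(Kc·ln(K/δ)) ≤ (6σ/Δ)·√(Kc·ln(K/δ)). -/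
/-!
For an arm `j ≠ 0`, the recentred difference of row sums `∑ i, X j i - ∑ i, X 0 i` is a sum of
independent centred Gaussians whose variances `σ² / t` are at most `σ² / t_W`, so it is sub-Gaussian
with variance proxy `2 n σ² / t_W`. Its mean is at most `-n Δ`, so the Chernoff bound gives
`P(μ̂₀ ≤ μ̂ⱼ) ≤ exp (-n t_W Δ² / (4 σ²))`, which the choice of `t_W` and `n ≥ t_W / (K c)` makes at
most `δ / K`. A union bound over the competitors of arm `0` finishes; the cost identity is algebra.
-/

open MeasureTheory ProbabilityTheory Real
open scoped NNReal

namespace ProbabilityTheory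

variable {Ω : Type*} [MeasurableSpace Ω] {P : Measure Ω}

lemma HasSubgaussianMGF.mono {X : Ω → ℝ} {c c' : ℝ≥0}
    (h : HasSubgaussianMGF X c P) (hc : c ≤ c') : HasSubgaussianMGF X c' P where
  integrable_exp_mul := h.integrable_exp_mul
  mgf_le t := (h.mgf_le t).trans (by gcongr)

lemma hasSubgaussianMGF_gaussianReal_zero (v : ℝ≥0) :
    HasSubgaussianMGF id v (gaussianReal 0 v) where
  integrable_exp_mul := integrable_exp_mul_gaussianReal
  mgf_le t := by simp [mgf_id_gaussianReal]

lemma hasSubgaussianMGF_sub_of_hasLaw_gaussianReal {X : Ω → ℝ} {m : ℝ} {v : ℝ≥0}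
    (hX : HasLaw X (gaussianReal m v) P) : HasSubgaussianMGF (fun ω ↦ X ω - m) v P := by
  have hY := gaussianReal_sub_const hX m
  rw [sub_self] at hY
  rw [← HasSubgaussianMGF.id_map_iff hY.aemeasurable, hY.map_eq]
  exact hasSubgaussianMGF_gaussianReal_zero v

lemma hasSubgaussianMGF_sum_sub_of_iIndepFun {ι : Type*} [Fintype ι] {X : ι → Ω → ℝ}
    (hindep : iIndepFun X P) {m : ι → ℝ} {v : ι → ℝ≥0}
    (hX : ∀ i, HasLaw (X i) (gaussianReal (m i) (v i)) P) :
    HasSubgaussianMGF (fun ω ↦ ∑ i, (X i ω - m i)) (∑ i, v i) P :=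
  HasSubgaussianMGF.sum_of_iIndepFun (hindep.comp (fun i x ↦ x - m i) fun _ ↦ by fun_prop)
    fun i _ ↦ hasSubgaussianMGF_sub_of_hasLaw_gaussianReal (hX i)

lemma iIndepFun.indepFun_rows {κ ι : Type*} [Fintype ι] {X : κ → ι → Ω → ℝ}
    (hindep : iIndepFun (fun p : κ × ι ↦ X p.1 p.2) P) (hX : ∀ k i, AEMeasurable (X k i) P)
    {a b : κ} (hab : a ≠ b) :
    IndepFun (fun ω i ↦ X a i ω) (fun ω i ↦ X b i ω) P := by
  have hST : Disjoint ({a} ×ˢ Finset.univ : Finset (κ × ι)) ({b} ×ˢ Finset.univ) := by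
    simp [Finset.disjoint_left, hab.symm]
  exact (hindep.indepFun_finset₀ _ _ hST fun p ↦ hX p.1 p.2).comp
    (φ := fun f i ↦ f ⟨(a, i), by simp⟩) (ψ := fun f i ↦ f ⟨(b, i), by simp⟩)
    (measurable_pi_lambda _ fun i ↦ measurable_pi_apply _)
    (measurable_pi_lambda _ fun i ↦ measurable_pi_apply _)

lemma measureReal_sum_le_sum_le_exp {κ ι : Type*} [Fintype ι] {X : κ → ι → Ω → ℝ}
    (hindep : iIndepFun (fun p : κ × ι ↦ X p.1 p.2) P) {m : κ → ℝ} {v : κ → ι → ℝ≥0} {s : ℝ≥0}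
    (hX : ∀ k i, HasLaw (X k i) (gaussianReal (m k) (v k i)) P) (hv : ∀ k i, v k i ≤ s)
    {a b : κ} (hab : a ≠ b) (hm : m b ≤ m a) :
    P.real {ω | ∑ i, X a i ω ≤ ∑ i, X b i ω} ≤
      exp (-(Fintype.card ι * (m a - m b) ^ 2) / (4 * s)) := by
  have := hindep.isProbabilityMeasure
  have hrow (k : κ) : HasSubgaussianMGF (fun ω ↦ ∑ i, (X k i ω - m k)) (Fintype.card ι • s) P :=
    (hasSubgaussianMGF_sum_sub_of_iIndepFun (hindep.precomp (Prod.mk_right_injective k))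
      (hX k)).mono (Finset.sum_le_card_nsmul _ _ _ fun i _ ↦ hv k i)
  have hind : IndepFun (fun ω ↦ ∑ i, (X b i ω - m b)) (fun ω ↦ ∑ i, (X a i ω - m a)) P :=
    (hindep.indepFun_rows (fun k i ↦ (hX k i).aemeasurable) hab.symm).comp
      (φ := fun f : ι → ℝ ↦ ∑ i, (f i - m b)) (ψ := fun f : ι → ℝ ↦ ∑ i, (f i - m a))
      (by fun_prop) (by fun_prop)
  have hε : 0 ≤ Fintype.card ι * (m a - m b) := by
    have := sub_nonneg.mpr hm
    positivity
  calc P.real {ω | ∑ i, X a i ω ≤ ∑ i, X b i ω}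
      ≤ P.real {ω | Fintype.card ι * (m a - m b) ≤
          ∑ i, (X b i ω - m b) - ∑ i, (X a i ω - m a)} := by
        refine measureReal_mono fun ω hω ↦ ?_
        simp only [Set.mem_ofPred_eq, Finset.sum_sub_distrib, Finset.sum_const, Finset.card_univ,
          nsmul_eq_mul] at hω ⊢
        linarith
    _ ≤ exp (-(Fintype.card ι * (m a - m b)) ^ 2 /
          (2 * ↑(Fintype.card ι • s + Fintype.card ι • s))) :=
        ((hrow b).sub_of_indepFun (hrow a) hind).measure_ge_le hε
    _ = exp (-(Fintype.card ι * (m a - m b) ^ 2) / (4 * s)) := by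
        congr 1
        rcases eq_or_ne (Fintype.card ι) 0 with h | h
        · simp [h]
        · have hcard : (Fintype.card ι : ℝ) ≠ 0 := by exact_mod_cast h
          rw [show (2 * ((Fintype.card ι • s + Fintype.card ι • s : ℝ≥0) : ℝ)) =
              Fintype.card ι * (4 * s) by push_cast; ring,
            show -(Fintype.card ι * (m a - m b)) ^ 2 =
              Fintype.card ι * -(Fintype.card ι * (m a - m b) ^ 2) by ring,
            mul_div_mul_left _ _ hcard]

lemma measure_sum_le_sum_le_of_log_le {κ ι : Type*} [Fintype ι] {X : κ → ι → Ω → ℝ}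
    (hindep : iIndepFun (fun p : κ × ι ↦ X p.1 p.2) P) {m : κ → ℝ} {v : κ → ι → ℝ≥0} {s : ℝ≥0}
    (hX : ∀ k i, HasLaw (X k i) (gaussianReal (m k) (v k i)) P) (hv : ∀ k i, v k i ≤ s)
    {a b : κ} (hab : a ≠ b) {Δ ε : ℝ} (hΔ : 0 ≤ Δ) (hgap : Δ ≤ m a - m b) (hε : 0 < ε)
    (hlog : log ε⁻¹ ≤ Fintype.card ι * Δ ^ 2 / (4 * s)) :
    P {ω | ∑ i, X a i ω ≤ ∑ i, X b i ω} ≤ ENNReal.ofReal ε := by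
  have := hindep.isProbabilityMeasure
  rw [← ofReal_measureReal]
  refine ENNReal.ofReal_le_ofReal
    ((measureReal_sum_le_sum_le_exp hindep hX hv hab (by linarith)).trans ?_)
  calc _ ≤ exp (-log ε⁻¹) := by
        rw [exp_le_exp, neg_div, neg_le_neg_iff]
        exact hlog.trans (by gcongr)
    _ = ε := by rw [exp_neg, exp_log (inv_pos.mpr hε), inv_inv]

lemma ofReal_one_sub_le_measure_forall_ne_lt [IsProbabilityMeasure P] {κ : Type*} [Fintype κ]
    (Y : κ → Ω → ℝ) (a : κ) {δ : ℝ} (hδ : 0 ≤ δ)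
    (h : ∀ j ≠ a, P {ω | Y a ω ≤ Y j ω} ≤ ENNReal.ofReal (δ / Fintype.card κ)) :
    ENNReal.ofReal (1 - δ) ≤ P {ω | ∀ j ≠ a, Y j ω < Y a ω} := by
  classical
  have hcompl : {ω | ∀ j ≠ a, Y j ω < Y a ω}ᶜ ⊆ ⋃ j ∈ Finset.univ.erase a, {ω | Y a ω ≤ Y j ω} := by
    intro ω hω
    simp only [Set.mem_compl_iff, Set.mem_ofPred_eq, not_forall, not_lt] at hω
    obtain ⟨j, hj, hle⟩ := hω
    exact Set.mem_biUnion (Finset.mem_erase.mpr ⟨hj, Finset.mem_univ j⟩) hle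
  have hbad : P {ω | ∀ j ≠ a, Y j ω < Y a ω}ᶜ ≤ ENNReal.ofReal δ :=
    calc _ ≤ ∑ j ∈ Finset.univ.erase a, P {ω | Y a ω ≤ Y j ω} :=
          (measure_mono hcompl).trans (measure_biUnion_finset_le _ _)
      _ ≤ ∑ _j : κ, ENNReal.ofReal (δ / Fintype.card κ) :=
          (Finset.sum_le_sum fun j hj ↦ h j (Finset.ne_of_mem_erase hj)).trans
            (Finset.sum_le_sum_of_subset (Finset.erase_subset a _))
      _ = ENNReal.ofReal δ := by
          have : (Fintype.card κ : ℝ) ≠ 0 := by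
            exact_mod_cast (Fintype.card_pos_iff.mpr ⟨a⟩).ne'
          rw [Finset.sum_const, Finset.card_univ, nsmul_eq_mul, ← ENNReal.ofReal_natCast,
            ← ENNReal.ofReal_mul (by positivity), mul_div_cancel₀ _ this]
  rw [ENNReal.ofReal_sub _ hδ, ENNReal.ofReal_one, tsub_le_iff_right]
  calc 1 = P Set.univ := measure_univ.symm
    _ ≤ P {ω | ∀ j ≠ a, Y j ω < Y a ω} + P {ω | ∀ j ≠ a, Y j ω < Y a ω}ᶜ := by
        rw [← Set.union_compl_self {ω | ∀ j ≠ a, Y j ω < Y a ω}]; exact measure_union_le _ _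
    _ ≤ _ := add_le_add_right hbad _

end ProbabilityTheory

lemma le_mul_sq_div_of_mul_sqrt_le {a σ Δ L T N : ℝ} (ha : 0 < a) (hσ : 0 < σ) (hΔ : 0 < Δ)
    (hL : 0 ≤ L) (hT0 : 0 < T) (hT : 2 * σ / Δ * √(a * L) ≤ T) (hN : T / a ≤ N) :
    L ≤ N * Δ ^ 2 / (4 * (σ ^ 2 / T)) := by
  have hsq : (2 * σ / Δ) ^ 2 * (a * L) ≤ T ^ 2 := by
    have := pow_le_pow_left₀ (by positivity) hT 2
    rwa [mul_pow, sq_sqrt (by positivity)] at this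
  rw [le_div_iff₀ (by positivity)]
  calc L * (4 * (σ ^ 2 / T)) = (2 * σ / Δ) ^ 2 * (a * L) / a * Δ ^ 2 / T := by
        field_simp; ring
    _ ≤ T ^ 2 / a * Δ ^ 2 / T := by gcongr
    _ = T / a * Δ ^ 2 := by field_simp
    _ ≤ N * Δ ^ 2 := by gcongr

/-- **Theorem 1, WTCS.**
With `K ≥ 2` arms, per-sample cost `c` with `Kc ≥ 1`, confidence `δ`, means
`μ 0 > μ 1 ≥ … ≥ μ (K-1)` and gap `Δ = μ 0 - μ 1`, if the learner waits `tW ≥ (2σ/Δ)√(Kc ln(K/δ))`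
rounds and then samples every arm in each of the rounds `tW+1, …, tW+n` with `n ≥ tW/(Kc)`
(rewards being independent Gaussians `N(μ k, σ²/t)`), then with probability at least `1 - δ`
the arm with the highest empirical mean is arm `1` (index `0` here).  Moreover, with
`tW = (2σ/Δ)√(Kc ln(K/δ))` and `n = tW/(Kc)`, the cost `(tW + n) + c·K·n` equals
`(2σ/Δ)(2 + 1/(Kc))√(Kc ln(K/δ))` and is at most `(6σ/Δ)√(Kc ln(K/δ))`. -/
theorem wtcs_correctness_and_cost
    {Ω : Type*} [MeasurableSpace Ω] (P : Measure Ω) [IsProbabilityMeasure P]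
    (K : ℕ) (hK : 2 ≤ K) (σ c δ : ℝ) (hσ : 0 < σ)
    (hKc : 1 ≤ (K : ℝ) * c) (hδ0 : 0 < δ) (hδ1 : δ < 1)
    (μ : Fin K → ℝ)
    (hμtop : μ ⟨1, by omega⟩ < μ ⟨0, by omega⟩)
    (hμmono : ∀ i j : Fin K, i ≤ j → μ j ≤ μ i)
    (Δ : ℝ) (hΔ : Δ = μ ⟨0, by omega⟩ - μ ⟨1, by omega⟩)
    (tW n : ℕ) (htW0 : 0 < tW)
    (htW : (2 * σ / Δ) * Real.sqrt ((K : ℝ) * c * Real.log ((K : ℝ) / δ)) ≤ (tW : ℝ))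
    (hn : (tW : ℝ) / ((K : ℝ) * c) ≤ (n : ℝ))
    (X : Fin K → Fin n → Ω → ℝ)
    (hXmeas : ∀ k i, Measurable (X k i))
    (hXdist : ∀ (k : Fin K) (i : Fin n),
      P.map (X k i) = gaussianReal (μ k)
        (Real.toNNReal (σ ^ 2 / ((tW : ℝ) + 1 + (i : ℕ)))))
    (hXindep : iIndepFun
      (fun p : Fin K × Fin n => X p.1 p.2) P)
    (muhat : Fin K → Ω → ℝ)
    (hmuhat : ∀ k ω, muhat k ω = (1 / (n : ℝ)) * ∑ i : Fin n, X k i ω) :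
    ENNReal.ofReal (1 - δ) ≤
      P {ω | ∀ j : Fin K, j ≠ ⟨0, by omega⟩ → muhat j ω < muhat ⟨0, by omega⟩ ω} ∧
    ((2 * σ / Δ) * Real.sqrt ((K : ℝ) * c * Real.log ((K : ℝ) / δ)) +
        ((2 * σ / Δ) * Real.sqrt ((K : ℝ) * c * Real.log ((K : ℝ) / δ))) / ((K : ℝ) * c)) +
      c * (K : ℝ) *
        (((2 * σ / Δ) * Real.sqrt ((K : ℝ) * c * Real.log ((K : ℝ) / δ))) / ((K : ℝ) * c)) =
      (2 * σ / Δ) * (2 + 1 / ((K : ℝ) * c)) *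
        Real.sqrt ((K : ℝ) * c * Real.log ((K : ℝ) / δ)) ∧
    ((2 * σ / Δ) * Real.sqrt ((K : ℝ) * c * Real.log ((K : ℝ) / δ)) +
        ((2 * σ / Δ) * Real.sqrt ((K : ℝ) * c * Real.log ((K : ℝ) / δ))) / ((K : ℝ) * c)) +
      c * (K : ℝ) *
        (((2 * σ / Δ) * Real.sqrt ((K : ℝ) * c * Real.log ((K : ℝ) / δ))) / ((K : ℝ) * c)) ≤
      (6 * σ / Δ) * Real.sqrt ((K : ℝ) * c * Real.log ((K : ℝ) / δ)) := by
  have hK2 : (2 : ℝ) ≤ K := by exact_mod_cast hK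
  have hKc0 : 0 < (K : ℝ) * c := by linarith
  have hΔ0 : 0 < Δ := by linarith
  have htW0' : (0 : ℝ) < tW := by exact_mod_cast htW0
  have hlog : log (K / δ) ≤ n * Δ ^ 2 / (4 * (σ ^ 2 / tW)) :=
    le_mul_sq_div_of_mul_sqrt_le hKc0 hσ hΔ0
      (log_nonneg ((one_le_div hδ0).mpr (by linarith))) htW0' htW hn
  set s := √((K : ℝ) * c * log (K / δ))
  have hcost : (2 * σ / Δ * s + 2 * σ / Δ * s / (K * c)) + c * K * (2 * σ / Δ * s / (K * c)) =
      2 * σ / Δ * (2 + 1 / (K * c)) * s := by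
    have hc0 : c ≠ 0 := right_ne_zero_of_mul hKc0.ne'
    field_simp
    ring
  refine ⟨ofReal_one_sub_le_measure_forall_ne_lt muhat _ hδ0.le fun j hj ↦ ?_, hcost, ?_⟩
  · have hgap : Δ ≤ μ ⟨0, by omega⟩ - μ j := by
      have := hμmono ⟨1, by omega⟩ j (Fin.le_def.mpr (Nat.one_le_iff_ne_zero.mpr
        fun h ↦ hj (Fin.ext h)))
      linarith
    have hevent : {ω | muhat ⟨0, by omega⟩ ω ≤ muhat j ω} =
        {ω | ∑ i, X ⟨0, by omega⟩ i ω ≤ ∑ i, X j i ω} := by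
      ext ω
      simp only [Set.mem_ofPred_eq, hmuhat]
      exact mul_le_mul_iff_right₀ (one_div_pos.mpr ((div_pos htW0' hKc0).trans_le hn))
    rw [hevent, Fintype.card_fin]
    refine measure_sum_le_sum_le_of_log_le hXindep
      (fun k i ↦ ⟨(hXmeas k i).aemeasurable, hXdist k i⟩) (s := (σ ^ 2 / tW).toNNReal)
      (fun k i ↦ Real.toNNReal_le_toNNReal (div_le_div_of_nonneg_left (by positivity) htW0'
        (by linarith [(i : ℕ).cast_nonneg (α := ℝ)])))
      (Ne.symm hj) hΔ0.le hgap (by positivity) ?_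
    rwa [inv_div, Fintype.card_fin, Real.coe_toNNReal _ (by positivity)]
  · have : 1 / ((K : ℝ) * c) ≤ 1 := (div_le_one hKc0).mpr hKc
    calc _ = 2 * σ / Δ * (2 + 1 / (K * c)) * s := hcost
      _ ≤ 2 * σ / Δ * 3 * s := by gcongr; linarith
      _ = 6 * σ / Δ * s := by ring
end

section
/- Let σ > 0, λ > 0, Δ > 0, δ ∈ (0,1), and K ≥ 1 be reals, and set L = ln(36·K·σ²/(λ·δ·Δ²)). Assume L ≥ 1. Define T = (6σ/Δ)·√(λ·L). Then 4·(σ/T)·√(λ·ln(2·K·T²/(λ²·δ))) ≤ Δ. -/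
open Real

/-!
Write `A = 36Kσ²/(λδΔ²)`, so `L = log A` and `T² = 36σ²λL/Δ²`. The argument of the logarithm
at time `T` is then exactly `2AL`, and `log (2AL) = log 2 + L + log L ≤ 2L` because
`log L ≤ L - 1` and `log 2 < 1`. Hence `√(λ log (2AL)) ≤ (3/2)√(λL)`, while `σ/T = Δ/(6√(λL))`,
and the two factors `3/2` and `4/6` cancel.
-/

theorem log_two_mul_mul_log_le {x : ℝ} (hx : 1 ≤ log x) :
    log (2 * x * log x) ≤ 2 * log x := by
  have hx0 : x ≠ 0 := by
    rintro rfl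
    norm_num at hx
  have hlogx : 0 < log x := one_pos.trans_le hx
  rw [log_mul (by positivity) hlogx.ne', log_mul two_ne_zero hx0]
  linarith [log_le_sub_one_of_pos hlogx, log_two_lt_d9]

theorem elimination_arg_eq {σ lam Δ δ K L T : ℝ} (hlam : 0 < lam) (hL : 0 ≤ L)
    (hT : T = (6 * σ / Δ) * √(lam * L)) :
    2 * K * T ^ 2 / (lam ^ 2 * δ) = 2 * (36 * K * σ ^ 2 / (lam * δ * Δ ^ 2)) * L := by
  rw [hT, mul_pow, sq_sqrt (mul_nonneg hlam.le hL)]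
  field_simp
  ring

theorem elimination_time_bound_general
    (σ lam Δ δ K : ℝ) (hσ : 0 < σ) (hlam : 0 < lam) (hΔ : 0 < Δ)
    (L : ℝ) (hL : L = Real.log (36 * K * σ ^ 2 / (lam * δ * Δ ^ 2))) (hL1 : 1 ≤ L)
    (T : ℝ) (hT : T = (6 * σ / Δ) * Real.sqrt (lam * L)) :
    4 * (σ / T) * Real.sqrt (lam * Real.log (2 * K * T ^ 2 / (lam ^ 2 * δ))) ≤ Δ := by
  have hlamL : 0 < lam * L := mul_pos hlam (one_pos.trans_le hL1)
  have hlog : Real.log (2 * K * T ^ 2 / (lam ^ 2 * δ)) ≤ 9 / 4 * L := by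
    have hlogA := log_two_mul_mul_log_le (hL ▸ hL1)
    rw [← hL] at hlogA
    rw [elimination_arg_eq hlam (by linarith) hT]
    linarith
  have hsqrt : √(lam * Real.log (2 * K * T ^ 2 / (lam ^ 2 * δ))) ≤ 3 / 2 * √(lam * L) := by
    calc √(lam * Real.log (2 * K * T ^ 2 / (lam ^ 2 * δ)))
        ≤ √((3 / 2) ^ 2 * (lam * L)) := sqrt_le_sqrt (by nlinarith)
      _ = 3 / 2 * √(lam * L) := by rw [sqrt_mul' _ hlamL.le, sqrt_sq (by norm_num)]
  have hσT : σ / T * √(lam * L) = Δ / 6 := by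
    rw [hT]
    field_simp [(sqrt_pos.mpr hlamL).ne']
  calc 4 * (σ / T) * √(lam * Real.log (2 * K * T ^ 2 / (lam ^ 2 * δ)))
      ≤ 4 * (σ / T) * (3 / 2 * √(lam * L)) := by
        gcongr
        rw [hT]
        positivity
    _ = Δ := by linear_combination 6 * hσT

/-- For `σ, λ, Δ > 0`, `δ ∈ (0,1)` and `K ≥ 1` with
`L = ln(36Kσ²/(λδΔ²)) ≥ 1`, the time `T = (6σ/Δ)√(λL)` satisfies
`4 (σ/T) √(λ ln(2KT²/(λ²δ))) ≤ Δ`; i.e. the elimination condition `4 U_T ≤ Δ` holds at `T`. -/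
theorem elimination_time_bound
    (σ lam Δ δ K : ℝ) (hσ : 0 < σ) (hlam : 0 < lam) (hΔ : 0 < Δ)
    (hδ0 : 0 < δ) (hδ1 : δ < 1) (hK : 1 ≤ K)
    (L : ℝ) (hL : L = Real.log (36 * K * σ ^ 2 / (lam * δ * Δ ^ 2))) (hL1 : 1 ≤ L)
    (T : ℝ) (hT : T = (6 * σ / Δ) * Real.sqrt (lam * L)) :
    4 * (σ / T) * Real.sqrt (lam * Real.log (2 * K * T ^ 2 / (lam ^ 2 * δ))) ≤ Δ :=
  elimination_time_bound_general σ lam Δ δ K hσ hlam hΔ L hL hL1 T hT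
end
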